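/- arXiv:1410.2970 — 2 statements merged into one kernel-verified Lean document; each statement's English description precedes it below -/
import Mathlib

section
/- Suppose A, B ∈ SU(1,1) generate an irreducible subgroup, A = diag(ξ₁, ξ̄₁) is diagonal with ξ₁ = a₁ + b₁i and a₁ = cos(k₁π/α₁), B = [[ξ₂, η₂], [η̄₂, ξ̄₂]] with Re(ξ₂) = cos(k₂π/α₂) and η₂ real positive, and tr((AB)⁻¹) = ±2cos(k₃π/α₃). Then B is uniquely determined by the data (k₁/α₁, k₂/α₂, k₃/α₃), the sign of b₁, and the sign in front of the trace; in particular (a₂, b₂, η₂) satisfy a₂ = cos(k₂π/α₂), a₁a₂ − b₁b₂ = ±cos(k₃π/α₃), and η₂² = a₂² + b₂² − 1 ≥ 0. -/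
open Complex Matrix Real

lemma conj_aux (a b : ℝ) : starRingEnd ℂ ((a : ℂ) + b * I) = (a : ℂ) - b * I := by
  simp [Complex.ext_iff]

lemma tr_helper (a₁ b₁ a₂ b₂ η₂ : ℝ) (h1 : a₁ ^ 2 + b₁ ^ 2 = 1)
    (h2 : a₂ ^ 2 + b₂ ^ 2 - η₂ ^ 2 = 1) :
    Matrix.trace ((!![((a₁:ℂ) + b₁ * I), 0; 0, (a₁:ℂ) - b₁ * I] *
      !![((a₂:ℂ) + b₂ * I), (η₂:ℂ); (η₂:ℂ), (a₂:ℂ) - b₂ * I])⁻¹) =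
      ((2 * (a₁ * a₂ - b₁ * b₂) : ℝ) : ℂ) := by
  have h1c : ((a₁:ℂ))^2 + (b₁:ℂ)^2 = 1 := by exact_mod_cast congrArg (Complex.ofReal) h1
  have h2c : ((a₂:ℂ))^2 + (b₂:ℂ)^2 - (η₂:ℂ)^2 = 1 := by
    exact_mod_cast congrArg (Complex.ofReal) h2
  have hξ₁ : ((a₁:ℂ) + b₁ * I) * ((a₁:ℂ) - b₁ * I) = 1 := by
    linear_combination h1c - (b₁:ℂ)^2 * Complex.I_sq
  have hξ₂ : ((a₂:ℂ) + b₂ * I) * ((a₂:ℂ) - b₂ * I) - (η₂:ℂ)^2 = 1 := by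
    linear_combination h2c - (b₂:ℂ)^2 * Complex.I_sq
  rw [Matrix.mul_fin_two]
  have hdet : Matrix.det !![((a₁:ℂ) + b₁ * I) * ((a₂:ℂ) + b₂ * I) + 0 * (η₂:ℂ),
      ((a₁:ℂ) + b₁ * I) * (η₂:ℂ) + 0 * ((a₂:ℂ) - b₂ * I);
      0 * ((a₂:ℂ) + b₂ * I) + ((a₁:ℂ) - b₁ * I) * (η₂:ℂ),
      0 * (η₂:ℂ) + ((a₁:ℂ) - b₁ * I) * ((a₂:ℂ) - b₂ * I)] = 1 := by
    rw [Matrix.det_fin_two_of]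
    linear_combination (((a₂:ℂ) + b₂ * I) * ((a₂:ℂ) - b₂ * I) - (η₂:ℂ)^2) * hξ₁ + hξ₂
  rw [Matrix.inv_def, hdet, Ring.inverse_one, Matrix.adjugate_fin_two_of, one_smul,
    Matrix.trace_fin_two_of]
  push_cast
  linear_combination (2 * (b₁:ℂ) * b₂) * Complex.I_sq

-- an eigenvector of B
lemma eig_helper (a₂ b₂ η₂ : ℝ) (hη₂ : 0 < η₂) (h2 : a₂ ^ 2 + b₂ ^ 2 - η₂ ^ 2 = 1) :
    ∃ v : Fin 2 → ℂ, v ≠ 0 ∧ ∃ c : ℂ,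
      (!![((a₂:ℂ) + b₂ * I), (η₂:ℂ); (η₂:ℂ), (a₂:ℂ) - b₂ * I]).mulVec v = c • v := by
  obtain ⟨s, hs⟩ := IsAlgClosed.exists_pow_nat_eq ((a₂:ℂ)^2 - 1) (n := 2) (by norm_num)
  have h2c : ((a₂:ℂ))^2 + (b₂:ℂ)^2 - (η₂:ℂ)^2 = 1 := by
    exact_mod_cast congrArg (Complex.ofReal) h2
  refine ⟨![(η₂:ℂ), s - b₂ * I], ?_, (a₂:ℂ) + s, ?_⟩
  · intro h
    have h0 : ((η₂:ℂ)) = 0 := congrFun h 0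
    exact absurd (by exact_mod_cast h0) hη₂.ne'
  · funext i
    fin_cases i
    · simp [Matrix.mulVec, dotProduct, Fin.sum_univ_two]
      ring
    · simp [Matrix.mulVec, dotProduct, Fin.sum_univ_two]
      linear_combination -h2c + (b₂:ℂ)^2 * Complex.I_sq - hs

open Complex Matrix Real in
theorem stmt_16 (k₁ k₂ k₃ α₁ α₂ α₃ : ℕ)
    (hα₁ : 0 < α₁) (hα₂ : 0 < α₂) (hα₃ : 0 < α₃)
    (ε : ℝ) (hε : ε = 1 ∨ ε = -1)
    (a₁ b₁ : ℝ) (hA1 : a₁ ^ 2 + b₁ ^ 2 = 1) (ha₁ : a₁ = Real.cos (k₁ * π / α₁))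
    -- the diagonal matrix `A = diag(ξ₁, ξ̄₁)`
    (A : Matrix (Fin 2) (Fin 2) ℂ)
    (hA : A = !![(a₁ + b₁ * I : ℂ), 0; 0, starRingEnd ℂ (a₁ + b₁ * I)])
    -- data of `B`
    (a₂ b₂ η₂ : ℝ) (hη₂ : 0 < η₂) (hB1 : a₂ ^ 2 + b₂ ^ 2 - η₂ ^ 2 = 1)
    (B : Matrix (Fin 2) (Fin 2) ℂ)
    (hB : B = !![(a₂ + b₂ * I : ℂ), (η₂ : ℂ);
                 (η₂ : ℂ), starRingEnd ℂ (a₂ + b₂ * I)])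
    (ha₂ : a₂ = Real.cos (k₂ * π / α₂))
    (htr : Matrix.trace ((A * B)⁻¹) = ((ε * (2 * Real.cos (k₃ * π / α₃)) : ℝ) : ℂ))
    -- `A` and `B` generate an irreducible subgroup: no common eigenvector
    (hirr : ¬ ∃ v : Fin 2 → ℂ, v ≠ 0 ∧
      (∃ c : ℂ, A.mulVec v = c • v) ∧ (∃ c : ℂ, B.mulVec v = c • v))
    -- data of a second matrix `B'` with the same invariants and signs
    (a₂' b₂' η₂' : ℝ) (hη₂' : 0 < η₂') (hB1' : a₂' ^ 2 + b₂' ^ 2 - η₂' ^ 2 = 1)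
    (B' : Matrix (Fin 2) (Fin 2) ℂ)
    (hB' : B' = !![(a₂' + b₂' * I : ℂ), (η₂' : ℂ);
                   (η₂' : ℂ), starRingEnd ℂ (a₂' + b₂' * I)])
    (ha₂' : a₂' = Real.cos (k₂ * π / α₂))
    (htr' : Matrix.trace ((A * B')⁻¹) = ((ε * (2 * Real.cos (k₃ * π / α₃)) : ℝ) : ℂ)) :
    -- the stated equations, and uniqueness of `B`
    (a₂ = Real.cos (k₂ * π / α₂) ∧
     a₁ * a₂ - b₁ * b₂ = ε * Real.cos (k₃ * π / α₃) ∧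
     η₂ ^ 2 = a₂ ^ 2 + b₂ ^ 2 - 1 ∧ 0 ≤ a₂ ^ 2 + b₂ ^ 2 - 1) ∧
    B' = B := by
  rw [conj_aux] at hA hB hB'
  subst hA hB hB'
  have ht1 : 2 * (a₁ * a₂ - b₁ * b₂) = ε * (2 * Real.cos (k₃ * π / α₃)) := by
    have h := (tr_helper a₁ b₁ a₂ b₂ η₂ hA1 hB1).symm.trans htr
    exact_mod_cast h
  have ht2 : 2 * (a₁ * a₂' - b₁ * b₂') = ε * (2 * Real.cos (k₃ * π / α₃)) := by
    have h := (tr_helper a₁ b₁ a₂' b₂' η₂' hA1 hB1').symm.trans htr'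
    exact_mod_cast h
  have hb₁ : b₁ ≠ 0 := by
    intro hb
    subst hb
    obtain ⟨v, hv, c, hc⟩ := eig_helper a₂ b₂ η₂ hη₂ hB1
    apply hirr
    refine ⟨v, hv, ⟨(a₁ : ℂ), ?_⟩, ⟨c, hc⟩⟩
    funext i
    fin_cases i <;> simp [Matrix.mulVec, dotProduct, Fin.sum_univ_two] <;> ring
  have ha : a₂' = a₂ := ha₂'.trans ha₂.symm
  have hb : b₂' = b₂ := by
    have h : b₁ * b₂' = b₁ * b₂ := by rw [ha] at ht2; linarith
    exact mul_left_cancel₀ hb₁ h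
  have hq : η₂' = η₂ := by
    have h1 : η₂' ^ 2 = η₂ ^ 2 := by rw [ha, hb] at hB1'; linarith
    nlinarith [hη₂, hη₂']
  exact ⟨⟨ha₂, by linarith, by linarith, by nlinarith [sq_nonneg η₂]⟩, by rw [ha, hb, hq]⟩
end

section
/- Let a₁ = cos θ₁, b₁ = ±sin θ₁, a₂ = cos θ₂, and suppose b₂ ∈ ℝ satisfies b₂² ≥ sin²θ₂ and a₁a₂ − b₁b₂ = cos θ₃, with θ₁, θ₂, θ₃ ∈ (0, π). Then either 0 < θ₃/π ≤ |θ₁/π − θ₂/π| or 1 − |θ₁/π + θ₂/π − 1| ≤ θ₃/π < 1. -/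
/-! Since `|b₁| = sin θ₁` and `|b₂| ≥ sin θ₂`, the product `b₁ b₂` lies outside the open interval
`(-sin θ₁ sin θ₂, sin θ₁ sin θ₂)`, so `cos θ₃ = cos θ₁ cos θ₂ - b₁ b₂` lies outside the open interval
between `cos (θ₁ + θ₂)` and `cos (θ₁ - θ₂)`. Folding `θ₁ - θ₂` and `θ₁ + θ₂` back into `[0, π]`, where
cosine is decreasing, gives `θ₃ ≤ |θ₁ - θ₂|` or `π - |θ₁ + θ₂ - π| ≤ θ₃`. -/

open Real

lemma le_of_cos_le_cos {x y : ℝ} (hx : 0 ≤ x) (hy : y ≤ π) (h : cos x ≤ cos y) : y ≤ x :=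
  not_lt.mp fun hxy => (cos_lt_cos_of_nonneg_of_le_pi hx hy hxy).not_ge h

lemma cos_pi_sub_abs_sub_pi (s : ℝ) : cos (π - |s - π|) = cos s := by
  rw [cos_pi_sub, cos_abs, cos_sub_pi, neg_neg]

lemma le_abs_of_cos_le_cos {θ d : ℝ} (hθ : θ ≤ π) (h : cos d ≤ cos θ) : θ ≤ |d| :=
  le_of_cos_le_cos (abs_nonneg d) hθ (by rwa [cos_abs])

lemma pi_sub_abs_sub_pi_le_of_cos_le_cos {θ s : ℝ} (hθ : 0 ≤ θ) (h : cos θ ≤ cos s) :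
    π - |s - π| ≤ θ :=
  le_of_cos_le_cos hθ (sub_le_self π (abs_nonneg _)) (by rwa [cos_pi_sub_abs_sub_pi])

lemma cos_le_cos_add_or_cos_sub_le {x y z c : ℝ} (hc : sin x * sin y ≤ |c|)
    (h : cos x * cos y - c = cos z) : cos z ≤ cos (x + y) ∨ cos (x - y) ≤ cos z := by
  rw [cos_add, cos_sub]
  rcases abs_cases c with ⟨hc', _⟩ | ⟨hc', _⟩
  · left; linarith
  · right; linarith

lemma mul_le_abs_mul_of_sq_le_sq {a b c d : ℝ} (hb : |b| = a) (hc : 0 ≤ c) (hd : c ^ 2 ≤ d ^ 2) :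
    a * c ≤ |b * d| := by
  rw [abs_mul, hb]
  exact mul_le_mul_of_nonneg_left (abs_of_nonneg hc ▸ sq_le_sq.mp hd) (hb ▸ abs_nonneg b)

open Real in
theorem stmt_17 (θ₁ θ₂ θ₃ a₁ b₁ a₂ b₂ : ℝ)
    (h₁ : θ₁ ∈ Set.Ioo 0 π) (h₂ : θ₂ ∈ Set.Ioo 0 π) (h₃ : θ₃ ∈ Set.Ioo 0 π)
    (ha₁ : a₁ = Real.cos θ₁) (hb₁ : b₁ = Real.sin θ₁ ∨ b₁ = -Real.sin θ₁)
    (ha₂ : a₂ = Real.cos θ₂) (hb₂ : b₂ ^ 2 ≥ Real.sin θ₂ ^ 2)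
    (heq : a₁ * a₂ - b₁ * b₂ = Real.cos θ₃) :
    (0 < θ₃ / π ∧ θ₃ / π ≤ |θ₁ / π - θ₂ / π|) ∨
    (1 - |θ₁ / π + θ₂ / π - 1| ≤ θ₃ / π ∧ θ₃ / π < 1) := by
  obtain ⟨h1a, h1b⟩ := h₁
  obtain ⟨h2a, h2b⟩ := h₂
  obtain ⟨h3a, h3b⟩ := h₃
  have hsin₁ : 0 ≤ sin θ₁ := sin_nonneg_of_nonneg_of_le_pi h1a.le h1b.le
  have hb₁_abs : |b₁| = sin θ₁ := by rcases hb₁ with rfl | rfl <;> simp [abs_of_nonneg hsin₁]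
  have hprod : sin θ₁ * sin θ₂ ≤ |b₁ * b₂| :=
    mul_le_abs_mul_of_sq_le_sq hb₁_abs (sin_nonneg_of_nonneg_of_le_pi h2a.le h2b.le) hb₂
  subst ha₁ ha₂
  rcases cos_le_cos_add_or_cos_sub_le hprod heq with hsum | hdiff
  · right
    have hle := pi_sub_abs_sub_pi_le_of_cos_le_cos h3a.le hsum
    have hfold : θ₁ / π + θ₂ / π - 1 = (θ₁ + θ₂ - π) / π := by field_simp
    rw [hfold, abs_div, abs_of_pos pi_pos, one_sub_div pi_ne_zero]
    exact ⟨by gcongr, (div_lt_one pi_pos).mpr h3b⟩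
  · left
    have hle := le_abs_of_cos_le_cos h3b.le hdiff
    rw [← sub_div, abs_div, abs_of_pos pi_pos]
    exact ⟨div_pos h3a pi_pos, by gcongr⟩
end
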